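/- arXiv:1407.1408 — 6 statements merged into one kernel-verified Lean document; each statement's English description precedes it below -/
import Mathlib

section
/- Fix a nonempty finite type D. For every list l of Booleans, every function f : (Fin l.length → D) → ℝ, and every real number M, the complemented aggregation satisfies Agg (l.map Bool.not) (fun v => M - f v) = M - Agg l f, where the valuation spaces (Fin l.length → D) and (Fin (l.map Bool.not).length → D) are identified via l.length = (l.map Bool.not).length. (This is the paper's Theorem 6: complementing a min/max GFODD with respect to M swaps min and max aggregation and replaces each leaf value v by M - v, and yields M minus the original map value on every interpretation with domain D.) -/
/-- Min/max aggregation over a list of quantifier markers (`true` = max, `false` = min),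
applied to a real-valued function of valuations of the variables into the finite
nonempty domain `D`. -/
noncomputable def Agg (D : Type) [Fintype D] [Nonempty D] :
    (l : List Bool) → ((Fin l.length → D) → ℝ) → ℝ
  | [], f => f (fun i => i.elim0)
  | b :: l', f =>
    if b then ⨆ d : D, Agg D l' (fun v => f (Fin.cons d v))
    else ⨅ d : D, Agg D l' (fun v => f (Fin.cons d v))

lemma sub_ciInf_aux {D : Type} [Fintype D] [Nonempty D] (g : D → ℝ) (M : ℝ) :
    (⨆ d : D, (M - g d)) = M - ⨅ d : D, g d := by
  apply le_antisymm
  · exact ciSup_le fun d => sub_le_sub_left (ciInf_le (Set.Finite.bddBelow (Set.finite_range g)) d) M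
  · obtain ⟨d, hd⟩ := exists_eq_ciInf_of_finite (f := g)
    rw [← hd]
    exact le_ciSup (f := fun d : D => M - g d) (Set.Finite.bddAbove (Set.finite_range _)) d

lemma sub_ciSup_aux {D : Type} [Fintype D] [Nonempty D] (g : D → ℝ) (M : ℝ) :
    (⨅ d : D, (M - g d)) = M - ⨆ d : D, g d := by
  apply le_antisymm
  · obtain ⟨d, hd⟩ := exists_eq_ciSup_of_finite (f := g)
    rw [← hd]
    exact ciInf_le (f := fun d : D => M - g d) (Set.Finite.bddBelow (Set.finite_range _)) d
  · exact le_ciInf fun d => sub_le_sub_left (le_ciSup (Set.Finite.bddAbove (Set.finite_range g)) d) M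

/-- **Complementation of min/max GFODDs (Theorem 6).** Swapping min and max aggregation
and replacing each value `f v` by `M - f v` yields `M` minus the original aggregated value. -/
theorem agg_complement (D : Type) [Fintype D] [Nonempty D]
    (l : List Bool) (f : (Fin l.length → D) → ℝ) (M : ℝ) :
    Agg D (l.map Bool.not)
      (fun v => M - f (fun i => v (Fin.cast (by simp) i))) = M - Agg D l f := by
  induction l with
  | nil => dsimp only [List.map]; simp [Agg]
  | cons b l ih =>
    cases b <;> dsimp only [List.map] <;> simp only [List.map_cons, Agg, Bool.not_true, Bool.not_false, if_true, if_false,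
      Bool.false_eq_true, ite_true, ite_false]
    · rw [← sub_ciInf_aux]
      congr 1; funext d
      rw [← ih (fun v => f (Fin.cons d v))]
      congr 1; funext v
      congr 1; congr 1; funext i
      refine Fin.cases ?_ (fun j => ?_) i <;> simp [Fin.cons]
    · rw [← sub_ciSup_aux]
      congr 1; funext d
      rw [← ih (fun v => f (Fin.cons d v))]
      congr 1; funext v
      congr 1; congr 1; funext i
      refine Fin.cases ?_ (fun j => ?_) i <;> simp [Fin.cons]
end

section
/- Fix a nonempty finite type D. Let l₁ and l₂ be lists of Booleans of lengths m and n, let f : (Fin m → D) → ℝ and g : (Fin n → D) → ℝ, and let ⊙ : ℝ → ℝ → ℝ be a binary operation that is safe with respect to max and min in both arguments, i.e., for every x : ℝ and every function a : D → ℝ one has x ⊙ (⨆ d, a d) = ⨆ d, (x ⊙ a d), x ⊙ (⨅ d, a d) = ⨅ d, (x ⊙ a d), (⨆ d, a d) ⊙ x = ⨆ d, (a d ⊙ x), and (⨅ d, a d) ⊙ x = ⨅ d, (a d ⊙ x). Let l be any interleaving of l₁ and l₂: a list of length m + n together with strictly monotone maps e₁ : Fin m → Fin (m+n) and e₂ :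 Fin n → Fin (m+n) whose ranges are disjoint and jointly exhaust Fin (m+n), such that l.get (e₁ i) = l₁.get i for all i and l.get (e₂ j) = l₂.get j for all j. Then Agg l (fun v => f (fun i => v (e₁ i)) ⊙ g (fun j => v (e₂ j))) = (Agg l₁ f) ⊙ (Agg l₂ g). (This is the semantic content of the paper's Theorem 1 on combining standardized-apart GFODDs with a safe binary operation under any order-preserving interleaving of their aggregation lists.) -/
lemma agg_aux (D : Type) [Fintype D] [Nonempty D]
    (op : ℝ → ℝ → ℝ)
    (hsup_right : ∀ (x : ℝ) (a : D → ℝ), op x (⨆ d, a d) = ⨆ d, op x (a d))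
    (hinf_right : ∀ (x : ℝ) (a : D → ℝ), op x (⨅ d, a d) = ⨅ d, op x (a d))
    (hsup_left : ∀ (x : ℝ) (a : D → ℝ), op (⨆ d, a d) x = ⨆ d, op (a d) x)
    (hinf_left : ∀ (x : ℝ) (a : D → ℝ), op (⨅ d, a d) x = ⨅ d, op (a d) x)
    (l : List Bool) :
    ∀ (l₁ l₂ : List Bool)
      (f : (Fin l₁.length → D) → ℝ) (g : (Fin l₂.length → D) → ℝ)
      (e₁ : Fin l₁.length → Fin l.length) (e₂ : Fin l₂.length → Fin l.length),
      StrictMono e₁ → StrictMono e₂ →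
      (∀ i j, e₁ i ≠ e₂ j) →
      (∀ x, (∃ i, e₁ i = x) ∨ (∃ j, e₂ j = x)) →
      (∀ i, l.get (e₁ i) = l₁.get i) →
      (∀ j, l.get (e₂ j) = l₂.get j) →
      Agg D l (fun v => op (f (fun i => v (e₁ i))) (g (fun j => v (e₂ j)))) =
        op (Agg D l₁ f) (Agg D l₂ g) := by
  induction l with
  | nil =>
    intro l₁ l₂ f g e₁ e₂ _ _ _ _ _ _
    match l₁, l₂, f, g, e₁, e₂ with
    | [], [], f, g, e₁, e₂ =>
      show Agg D [] _ = op (Agg D [] f) (Agg D [] g)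
      simp only [Agg]
      congr 1
    | b :: t, _, f, g, e₁, e₂ => exact (e₁ ⟨0, Nat.succ_pos _⟩).elim0
    | [], b :: t, f, g, e₁, e₂ => exact (e₂ ⟨0, Nat.succ_pos _⟩).elim0
  | cons b l' ih =>
    intro l₁ l₂ f g e₁ e₂ hm₁ hm₂ hdisj hcov hg₁ hg₂
    simp only [List.length_cons] at e₁ e₂ hm₁ hm₂ hdisj hcov hg₁ hg₂
    rcases hcov 0 with ⟨i₀, hi₀⟩ | ⟨j₀, hj₀⟩
    · -- head comes from l₁
      obtain ⟨b₁, t₁, rfl⟩ : ∃ b₁ t₁, l₁ = b₁ :: t₁ := by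
        cases l₁ with
        | nil => exact i₀.elim0
        | cons b₁ t₁ => exact ⟨b₁, t₁, rfl⟩
      simp only [List.length_cons] at e₁ hm₁ hdisj hcov hg₁ i₀ hi₀ f
      have hi00 : i₀ = 0 := by
        by_contra h
        have := hm₁ (Fin.pos_of_ne_zero h)
        rw [hi₀] at this
        exact Fin.not_lt_zero _ this
      have h0 : e₁ 0 = 0 := hi00 ▸ hi₀
      have hb : b₁ = b := by
        have := hg₁ 0
        rw [h0] at this
        simpa using this.symm
      subst hb
      have hne₁ : ∀ i : Fin t₁.length, e₁ i.succ ≠ 0 := by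
        intro i h
        have := hm₁ (Fin.succ_pos i)
        rw [h, h0] at this
        exact Fin.not_lt_zero _ this
      have hne₂ : ∀ j, e₂ j ≠ 0 := fun j h => hdisj 0 j (h0.trans h.symm)
      set e₁' : Fin t₁.length → Fin l'.length := fun i => (e₁ i.succ).pred (hne₁ i) with he₁'
      set e₂' : Fin l₂.length → Fin l'.length := fun j => (e₂ j).pred (hne₂ j) with he₂'
      have hs₁ : ∀ i, (e₁' i).succ = e₁ i.succ := fun i => Fin.succ_pred _ _
      have hs₂ : ∀ j, (e₂' j).succ = e₂ j := fun j => Fin.succ_pred _ _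
      have hm₁' : StrictMono e₁' := by
        intro i j h
        have : e₁ i.succ < e₁ j.succ := hm₁ (by simpa using h)
        simpa [he₁', Fin.pred_lt_pred_iff] using this
      have hm₂' : StrictMono e₂' := by
        intro i j h
        have : e₂ i < e₂ j := hm₂ h
        simpa [he₂', Fin.pred_lt_pred_iff] using this
      have hdisj' : ∀ i j, e₁' i ≠ e₂' j := by
        intro i j h
        exact hdisj i.succ j (by rw [← hs₁, ← hs₂, h])
      have hcov' : ∀ x : Fin l'.length, (∃ i, e₁' i = x) ∨ (∃ j, e₂' j = x) := by
        intro x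
        rcases hcov x.succ with ⟨i, hi⟩ | ⟨j, hj⟩
        · have hne : i ≠ 0 := by
            intro h; rw [h, h0] at hi; exact Fin.succ_ne_zero x hi.symm
          obtain ⟨i', rfl⟩ := Fin.exists_succ_eq.mpr hne
          exact Or.inl ⟨i', Fin.succ_inj.mp (by rw [hs₁, hi])⟩
        · exact Or.inr ⟨j, Fin.succ_inj.mp (by rw [hs₂, hj])⟩
      have hg₁' : ∀ i, l'.get (e₁' i) = t₁.get i := by
        intro i
        have := hg₁ i.succ
        rw [← hs₁ i] at this
        simpa using this
      have hg₂' : ∀ j, l'.get (e₂' j) = l₂.get j := by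
        intro j
        have := hg₂ j
        rw [← hs₂ j] at this
        simpa using this
      have key : ∀ d : D, ∀ v : Fin l'.length → D,
          op (f (fun i => (Fin.cons d v : Fin (l'.length+1) → D) (e₁ i))) (g (fun j => (Fin.cons d v : Fin (l'.length+1) → D) (e₂ j)))
            = op (f (Fin.cons d (fun i => v (e₁' i)))) (g (fun j => v (e₂' j))) := by
        intro d v
        congr 1
        · congr 1
          funext i
          refine Fin.cases ?_ ?_ i
          · rw [h0]; simp
          · intro i'
            rw [← hs₁ i']
            simp
        · congr 1
          funext j
          rw [← hs₂ j]
          simp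
      have ihd : ∀ d : D,
          Agg D l' (fun v => op (f (Fin.cons d (fun i => v (e₁' i)))) (g (fun j => v (e₂' j))))
            = op (Agg D t₁ (fun w => f (Fin.cons d w))) (Agg D l₂ g) :=
        fun d => ih t₁ l₂ (fun w => f (Fin.cons d w)) g e₁' e₂' hm₁' hm₂' hdisj' hcov' hg₁' hg₂'
      cases b₁ with
      | true =>
        simp only [Agg, reduceIte]
        rw [hsup_left]
        congr 1
        funext d
        rw [← ihd d]
        congr 1
        funext v
        exact key d v
      | false =>
        simp only [Agg, Bool.false_eq_true, if_false]
        rw [hinf_left]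
        congr 1
        funext d
        rw [← ihd d]
        congr 1
        funext v
        exact key d v
    · -- head comes from l₂
      obtain ⟨b₂, t₂, rfl⟩ : ∃ b₂ t₂, l₂ = b₂ :: t₂ := by
        cases l₂ with
        | nil => exact j₀.elim0
        | cons b₂ t₂ => exact ⟨b₂, t₂, rfl⟩
      simp only [List.length_cons] at e₂ hm₂ hdisj hcov hg₂ j₀ hj₀ g
      have hj00 : j₀ = 0 := by
        by_contra h
        have := hm₂ (Fin.pos_of_ne_zero h)
        rw [hj₀] at this
        exact Fin.not_lt_zero _ this
      have h0 : e₂ 0 = 0 := hj00 ▸ hj₀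
      have hb : b₂ = b := by
        have := hg₂ 0
        rw [h0] at this
        simpa using this.symm
      subst hb
      have hne₂ : ∀ j : Fin t₂.length, e₂ j.succ ≠ 0 := by
        intro j h
        have := hm₂ (Fin.succ_pos j)
        rw [h, h0] at this
        exact Fin.not_lt_zero _ this
      have hne₁ : ∀ i, e₁ i ≠ 0 := fun i h => hdisj i 0 (h.trans h0.symm)
      set e₁' : Fin l₁.length → Fin l'.length := fun i => (e₁ i).pred (hne₁ i) with he₁'
      set e₂' : Fin t₂.length → Fin l'.length := fun j => (e₂ j.succ).pred (hne₂ j) with he₂'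
      have hs₁ : ∀ i, (e₁' i).succ = e₁ i := fun i => Fin.succ_pred _ _
      have hs₂ : ∀ j, (e₂' j).succ = e₂ j.succ := fun j => Fin.succ_pred _ _
      have hm₁' : StrictMono e₁' := by
        intro i j h
        have : e₁ i < e₁ j := hm₁ h
        simpa [he₁', Fin.pred_lt_pred_iff] using this
      have hm₂' : StrictMono e₂' := by
        intro i j h
        have : e₂ i.succ < e₂ j.succ := hm₂ (by simpa using h)
        simpa [he₂', Fin.pred_lt_pred_iff] using this
      have hdisj' : ∀ i j, e₁' i ≠ e₂' j := by
        intro i j h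
        exact hdisj i j.succ (by rw [← hs₁, ← hs₂, h])
      have hcov' : ∀ x : Fin l'.length, (∃ i, e₁' i = x) ∨ (∃ j, e₂' j = x) := by
        intro x
        rcases hcov x.succ with ⟨i, hi⟩ | ⟨j, hj⟩
        · exact Or.inl ⟨i, Fin.succ_inj.mp (by rw [hs₁, hi])⟩
        · have hne : j ≠ 0 := by
            intro h; rw [h, h0] at hj; exact Fin.succ_ne_zero x hj.symm
          obtain ⟨j', rfl⟩ := Fin.exists_succ_eq.mpr hne
          exact Or.inr ⟨j', Fin.succ_inj.mp (by rw [hs₂, hj])⟩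
      have hg₁' : ∀ i, l'.get (e₁' i) = l₁.get i := by
        intro i
        have := hg₁ i
        rw [← hs₁ i] at this
        simpa using this
      have hg₂' : ∀ j, l'.get (e₂' j) = t₂.get j := by
        intro j
        have := hg₂ j.succ
        rw [← hs₂ j] at this
        simpa using this
      have key : ∀ d : D, ∀ v : Fin l'.length → D,
          op (f (fun i => (Fin.cons d v : Fin (l'.length+1) → D) (e₁ i))) (g (fun j => (Fin.cons d v : Fin (l'.length+1) → D) (e₂ j)))
            = op (f (fun i => v (e₁' i))) (g (Fin.cons d (fun j => v (e₂' j)))) := by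
        intro d v
        congr 1
        · congr 1
          funext i
          rw [← hs₁ i]
          simp
        · congr 1
          funext j
          refine Fin.cases ?_ ?_ j
          · rw [h0]; simp
          · intro j'
            rw [← hs₂ j']
            simp
      have ihd : ∀ d : D,
          Agg D l' (fun v => op (f (fun i => v (e₁' i))) (g (Fin.cons d (fun j => v (e₂' j)))))
            = op (Agg D l₁ f) (Agg D t₂ (fun w => g (Fin.cons d w))) :=
        fun d => ih l₁ t₂ f (fun w => g (Fin.cons d w)) e₁' e₂' hm₁' hm₂' hdisj' hcov' hg₁' hg₂'
      cases b₂ with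
      | true =>
        simp only [Agg, reduceIte]
        rw [hsup_right]
        congr 1
        funext d
        rw [← ihd d]
        congr 1
        funext v
        exact key d v
      | false =>
        simp only [Agg, Bool.false_eq_true, if_false]
        rw [hinf_right]
        congr 1
        funext d
        rw [← ihd d]
        congr 1
        funext v
        exact key d v

/-- **Combining GFODDs with a safe binary operation (Theorem 1).**
If `op` is safe w.r.t. max and min aggregation in both arguments, and `l` is any
order-preserving interleaving (via `e₁`, `e₂`) of the aggregation lists `l₁` and `l₂`,
then aggregating the pointwise combination over `l` equals the combination of the
separate aggregations. -/
theorem agg_apply_interleaving (D : Type) [Fintype D] [Nonempty D]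
    (l₁ l₂ : List Bool)
    (f : (Fin l₁.length → D) → ℝ) (g : (Fin l₂.length → D) → ℝ)
    (op : ℝ → ℝ → ℝ)
    (hsup_right : ∀ (x : ℝ) (a : D → ℝ), op x (⨆ d, a d) = ⨆ d, op x (a d))
    (hinf_right : ∀ (x : ℝ) (a : D → ℝ), op x (⨅ d, a d) = ⨅ d, op x (a d))
    (hsup_left : ∀ (x : ℝ) (a : D → ℝ), op (⨆ d, a d) x = ⨆ d, op (a d) x)
    (hinf_left : ∀ (x : ℝ) (a : D → ℝ), op (⨅ d, a d) x = ⨅ d, op (a d) x)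
    (l : List Bool) (hl : l.length = l₁.length + l₂.length)
    (e₁ : Fin l₁.length → Fin (l₁.length + l₂.length))
    (e₂ : Fin l₂.length → Fin (l₁.length + l₂.length))
    (he₁ : StrictMono e₁) (he₂ : StrictMono e₂)
    (hdisj : ∀ i j, e₁ i ≠ e₂ j)
    (hcover : ∀ x : Fin (l₁.length + l₂.length), (∃ i, e₁ i = x) ∨ (∃ j, e₂ j = x))
    (hget₁ : ∀ i, l.get (Fin.cast hl.symm (e₁ i)) = l₁.get i)
    (hget₂ : ∀ j, l.get (Fin.cast hl.symm (e₂ j)) = l₂.get j) :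
    Agg D l (fun v =>
        op (f (fun i => v (Fin.cast hl.symm (e₁ i))))
          (g (fun j => v (Fin.cast hl.symm (e₂ j))))) =
      op (Agg D l₁ f) (Agg D l₂ g) := by
  exact agg_aux D op hsup_right hinf_right hsup_left hinf_left l l₁ l₂ f g
    (fun i => Fin.cast hl.symm (e₁ i)) (fun j => Fin.cast hl.symm (e₂ j))
    (fun a b hab => he₁ hab)
    (fun a b hab => he₂ hab)
    (fun i j h => hdisj i j (by
      apply Fin.ext
      have h2 := congrArg Fin.val h
      simpa only [Fin.coe_cast] using h2))
    (fun x => by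
      rcases hcover (Fin.cast hl x) with ⟨i, hi⟩ | ⟨j, hj⟩
      · exact Or.inl ⟨i, by apply Fin.ext; rw [Fin.coe_cast, hi, Fin.coe_cast]⟩
      · exact Or.inr ⟨j, by apply Fin.ext; rw [Fin.coe_cast, hj, Fin.coe_cast]⟩)
    hget₁ hget₂
end

section
/- Let L_P be the first-order language with a single unary relation symbol P and no other symbols, and let 𝔹 be the L_P-structure with universe Bool in which P holds of exactly true. Let ψ be a quantifier-free L_P-formula with n free variables that contains no equality atoms. Then the existential sentence ∃w₁…∃wₙ ψ holds in some nonempty L_P-structure if and only if 𝔹 ⊨ ∃w₁…∃wₙ ψ. (This is the logical core of the paper's Theorem 3: satisfiability of equality-free existential monadic sentences is decided by the two-element Boolean structure.) -/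
open FirstOrder Language Structure

/-- The relation symbols of the language with a single unary relation `P`. -/
inductive PRel : ℕ → Type
  | P : PRel 1

/-- The first-order language with a single unary relation symbol `P` and no other symbols. -/
def LP : FirstOrder.Language := ⟨fun _ => Empty, PRel⟩

/-- The symbol `P`. -/
abbrev Psymb : LP.Relations 1 := PRel.P

/-- The structure `𝔹` on `Bool` in which `P` holds of exactly `true`. -/
instance boolStructure : LP.Structure Bool where
  funMap := fun {_} f _ => Empty.elim f
  RelMap | .P => fun x => x 0 = true

/-- Equality-freeness of a bounded formula: it contains no equality atoms. -/
def EqFree {L : FirstOrder.Language} {α : Type} : ∀ {n : ℕ}, L.BoundedFormula α n → Prop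
  | _, .falsum => True
  | _, .equal _ _ => False
  | _, .rel _ _ => True
  | _, .imp f g => EqFree f ∧ EqFree g
  | _, .all f => EqFree f

open scoped Classical in
/-- Transfer realization from `M` to `Bool` along `m ↦ decide (P m)`. -/
lemma realize_map_bool {M : Type} [instM : LP.Structure M] :
    ∀ {m : ℕ} (φ : LP.BoundedFormula Empty m), φ.IsQF → EqFree φ →
      ∀ (v : Empty → M) (v' : Empty → Bool) (xs : Fin m → M),
        φ.Realize v xs ↔
          φ.Realize v' (fun i => decide (RelMap Psymb (fun _ => xs i))) := by
  intro m φ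
  induction φ with
  | falsum => simp [BoundedFormula.Realize]
  | equal t₁ t₂ => intro _ hef; exact absurd hef id
  | rel R ts =>
    intro _ _ v v' xs
    cases R with
    | P =>
      have hterm : ∀ (t : LP.Term (Empty ⊕ Fin _)),
          Term.realize (Sum.elim v' (fun i => decide (RelMap Psymb (fun _ => xs i)))) t
            = decide (RelMap Psymb (fun _ => Term.realize (Sum.elim v xs) t)) := by
        intro t
        cases t with
        | var a => cases a with
          | inl e => exact e.elim
          | inr i => rfl
        | func f _ => exact f.elim
      show (RelMap Psymb fun i => Term.realize (Sum.elim v xs) (ts i)) ↔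
        (RelMap Psymb fun i =>
          Term.realize (Sum.elim v' (fun i => decide (RelMap Psymb (fun _ => xs i)))) (ts i))
      have hone : ∀ (w : Fin 1 → M), RelMap Psymb w ↔ RelMap Psymb (fun _ => w 0) := by
        intro w
        have hw : w = fun _ => w 0 := funext fun i => by
          have : i = 0 := Subsingleton.elim i 0
          rw [this]
        exact hw ▸ Iff.rfl
      rw [hone]
      show _ ↔ ((fun i => Term.realize
          (Sum.elim v' (fun i => decide (RelMap Psymb (fun _ => xs i)))) (ts i)) 0 = true)
      simp only [hterm]
      rw [decide_eq_true_iff]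
  | imp f g ihf ihg =>
    intro hqf hef v v' xs
    have hq : f.IsQF ∧ g.IsQF := by
      cases hqf with
      | of_isAtomic h => cases h
      | imp h₁ h₂ => exact ⟨h₁, h₂⟩
    simp only [BoundedFormula.realize_imp]
    rw [ihf hq.1 hef.1 v v' xs, ihg hq.2 hef.2 v v' xs]
  | all f ih =>
    intro hqf
    exact absurd hqf (BoundedFormula.not_all_isQF f)

/-- **Satisfiability via the Boolean structure (core of Theorem 3).** An equality-free
quantifier-free monadic formula `ψ`, existentially quantified, is satisfiable in some nonempty
structure iff it holds in the two-element Boolean structure `𝔹`. -/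
theorem exists_model_iff_bool_realize (n : ℕ) (ψ : LP.BoundedFormula Empty n)
    (hqf : ψ.IsQF) (hef : EqFree ψ) :
    (∃ (M : Type) (instM : LP.Structure M), Nonempty M ∧ @Sentence.Realize LP M instM ψ.exs) ↔
      Bool ⊨ ψ.exs := by
  classical
  constructor
  · rintro ⟨M, instM, _, hM⟩
    simp only [Sentence.Realize, BoundedFormula.realize_exs] at hM ⊢
    obtain ⟨xs, hxs⟩ := hM
    refine ⟨fun i => decide (RelMap Psymb (fun _ => xs i)), ?_⟩
    exact (realize_map_bool ψ hqf hef _ _ xs).mp hxs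
  · intro h
    exact ⟨Bool, boolStructure, ⟨true⟩, h⟩
end

section
/- Let L_P be the first-order language with a single unary relation symbol P and no other symbols, and let σ be the L_P-sentence ∃y₁∃y₂∀z₁∀z₂∀z₃ [ ¬(P y₁ ↔ P y₂) ∧ (z₁ = z₂ ∨ z₁ = z₃ ∨ z₂ = z₃) ]. Then for every nonempty L_P-structure M: M ⊨ σ if and only if the universe of M has exactly two elements and P^M holds of exactly one of them. (This is Claim C1 in the proof of the paper's Theorem 7: the diagram B₁ with aggregation max y₁ max y₂ min z₁ min z₂ min z₃ is satisfied exactly by interpretations isomorphic to the intended two-object Boolean interpretation I*.) -/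
open FirstOrder Language Structure

/-- The atom `P x_i`. -/
def Patom {n : ℕ} (i : Fin n) : LP.BoundedFormula Empty n :=
  Psymb.boundedFormula₁ (Term.var (Sum.inr i))

/-- The atom `x_i = x_j`. -/
def eqAtom {L : FirstOrder.Language} {n : ℕ} (i j : Fin n) : L.BoundedFormula Empty n :=
  Term.bdEqual (Term.var (Sum.inr i)) (Term.var (Sum.inr j))

/-- The sentence `∃y₁∃y₂∀z₁∀z₂∀z₃ [¬(P y₁ ↔ P y₂) ∧ (z₁ = z₂ ∨ z₁ = z₃ ∨ z₂ = z₃)]`,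
with variables `0,1` playing `y₁,y₂` and `2,3,4` playing `z₁,z₂,z₃`. -/
def sigmaSentence : LP.Sentence :=
  ((∼((Patom (0 : Fin 5)).iff (Patom 1)) ⊓
      (eqAtom (2 : Fin 5) 3 ⊔ eqAtom (2 : Fin 5) 4 ⊔ eqAtom (3 : Fin 5) 4)).all.all.all).ex.ex

lemma snoc5 {M : Type} (a b c d e : M) :
    (Fin.snoc (Fin.snoc (Fin.snoc (Fin.snoc (Fin.snoc (default : Fin 0 → M) a) b) c) d) e
      : Fin 5 → M) = ![a, b, c, d, e] := by
  funext i
  fin_cases i <;> norm_num [Fin.snoc]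

/-- **Claim C1 of Theorem 7.** A nonempty structure satisfies `σ` iff its universe has exactly
two elements and `P` holds of exactly one of them. -/
theorem sigma_realize_iff (M : Type) [LP.Structure M] [Nonempty M] :
    M ⊨ sigmaSentence ↔ (Nat.card M = 2 ∧ ∃! x : M, RelMap Psymb ![x]) := by
  have key : M ⊨ sigmaSentence ↔
      ∃ y₁ y₂ : M, ¬(RelMap Psymb ![y₁] ↔ RelMap Psymb ![y₂]) ∧
        ∀ z₁ z₂ z₃ : M, z₁ = z₂ ∨ z₁ = z₃ ∨ z₂ = z₃ := by
    simp only [sigmaSentence, Patom, eqAtom, Sentence.Realize, Formula.Realize,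
      BoundedFormula.realize_ex, BoundedFormula.realize_all, BoundedFormula.realize_inf,
      BoundedFormula.realize_sup, BoundedFormula.realize_not, BoundedFormula.realize_iff,
      BoundedFormula.realize_bdEqual, BoundedFormula.realize_rel₁, Term.realize_var, Sum.elim_inr, snoc5, Matrix.cons_val_zero, Matrix.cons_val_one,
      Matrix.head_cons, Matrix.cons_val_fin_one, Matrix.cons_val_two, Matrix.cons_val_three,
      Matrix.cons_val_four, Matrix.tail_cons]
    constructor
    · rintro ⟨a, b, h⟩
      exact ⟨a, b, (h a a a).1, fun z₁ z₂ z₃ => by have := (h z₁ z₂ z₃).2; tauto⟩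
    · rintro ⟨a, b, h1, h2⟩
      exact ⟨a, b, fun z₁ z₂ z₃ => ⟨h1, by have := h2 z₁ z₂ z₃; tauto⟩⟩
  rw [key]
  constructor
  · rintro ⟨y₁, y₂, hiff, htri⟩
    have hne : y₁ ≠ y₂ := fun h => hiff (by rw [h])
    have hall : ∀ z : M, z = y₁ ∨ z = y₂ := fun z => by
      rcases htri z y₁ y₂ with h | h | h
      · exact Or.inl h
      · exact Or.inr h
      · exact absurd h hne
    have hcard : Nat.card M = 2 := by
      rw [Nat.card_eq_two_iff]
      exact ⟨y₁, y₂, hne, Set.eq_univ_of_forall fun z => by rcases hall z with h | h <;> simp [h]⟩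
    refine ⟨hcard, ?_⟩
    by_cases h1 : RelMap Psymb ![y₁]
    · have h2 : ¬ RelMap Psymb ![y₂] := fun h2 => hiff ⟨fun _ => h2, fun _ => h1⟩
      exact ⟨y₁, h1, fun z hz => by rcases hall z with h | h <;> [exact h; exact absurd (h ▸ hz) h2]⟩
    · have h2 : RelMap Psymb ![y₂] := by tauto
      exact ⟨y₂, h2, fun z hz => by rcases hall z with h | h <;> [exact absurd (h ▸ hz) h1; exact h]⟩
  · rintro ⟨hcard, x, hx, hu⟩
    obtain ⟨a, b, hab, huniv⟩ := Nat.card_eq_two_iff.mp hcard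
    have hall : ∀ z : M, z = a ∨ z = b := fun z => by
      have := huniv ▸ Set.mem_univ z
      simpa using this
    have hxab : x = a ∨ x = b := hall x
    obtain ⟨y, hyx⟩ : ∃ y : M, y ≠ x := by
      rcases hxab with h | h
      · exact ⟨b, fun hb => hab (by rw [← h, hb])⟩
      · exact ⟨a, fun ha => hab (by rw [← h, ha])⟩
    have hy : ¬ RelMap Psymb ![y] := fun h => hyx (hu y h)
    refine ⟨x, y, fun h => hy (h.mp hx), fun z₁ z₂ z₃ => ?_⟩
    rcases hall z₁ with h1 | h1 <;> rcases hall z₂ with h2 | h2 <;> rcases hall z₃ with h3 | h3 <;>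
      simp [h1, h2, h3]
end

section
/- Let L_P be the first-order language with a single unary relation symbol P, let 𝔹 be the L_P-structure with universe Bool in which P holds of exactly true, and let σ be the L_P-sentence ∃y₁∃y₂∀z₁∀z₂∀z₃ [¬(P y₁ ↔ P y₂) ∧ (z₁ = z₂ ∨ z₁ = z₃ ∨ z₂ = z₃)]. Then for every L_P-sentence Φ: 𝔹 ⊨ Φ if and only if there exists a nonempty L_P-structure M with M ⊨ σ and M ⊨ Φ. In particular, taking Φ to be a prenex sentence Q₁w₁…Q_mw_m ψ with ψ quantifier-free, truth of the corresponding quantified Boolean statement (evaluated in 𝔹) is equivalent to joint satisfiability of σ and Φ. (This is the semantic core of the reduction from QBF satisfiability used in the paper's Theorem 7 on GFODD Satisfiability for max-k-alternating diagrams.) -/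
open FirstOrder Language Structure

lemma relMap_bool (x : Fin 1 → Bool) : RelMap Psymb x ↔ x 0 = true := Iff.rfl

lemma sigma_iff (M : Type) [LP.Structure M] :
    (M ⊨ sigmaSentence) ↔ ∃ a b : M, ¬(RelMap Psymb ![a] ↔ RelMap Psymb ![b]) ∧
      ∀ x y z : M, x = y ∨ x = z ∨ y = z := by
  simp [sigmaSentence, Sentence.Realize, Formula.Realize, Patom, eqAtom,
    BoundedFormula.realize_ex, BoundedFormula.realize_all, BoundedFormula.realize_inf,
    BoundedFormula.realize_sup, BoundedFormula.realize_not, BoundedFormula.realize_iff,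
    BoundedFormula.realize_bdEqual, BoundedFormula.realize_rel₁, Fin.snoc]
  norm_num
  constructor
  · rintro ⟨a, b, h⟩
    refine ⟨⟨a, b, (h a a a).1⟩, fun x y z => ?_⟩
    have := (h x y z).2; tauto
  · rintro ⟨⟨a, b, hab⟩, h3⟩
    refine ⟨a, b, fun x y z => ⟨hab, ?_⟩⟩
    have := h3 x y z; try simp
    tauto

/-- **Semantic core of the QBF reduction in Theorem 7.** A sentence `Φ` holds in the Boolean
structure `𝔹` iff `σ ∧ Φ` is satisfiable in some nonempty structure. -/
theorem bool_realize_iff_joint_sat (Φ : LP.Sentence) :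
    Bool ⊨ Φ ↔
      ∃ (M : Type) (instM : LP.Structure M), Nonempty M ∧
        @Sentence.Realize LP M instM sigmaSentence ∧ @Sentence.Realize LP M instM Φ := by
  classical
  constructor
  · intro hΦ
    refine ⟨Bool, boolStructure, ⟨true⟩, ?_, hΦ⟩
    rw [sigma_iff]
    exact ⟨true, false, fun h => Bool.false_ne_true (h.mp rfl), by decide⟩
  · rintro ⟨M, instM, ⟨m0⟩, hσ, hΦ⟩
    rw [sigma_iff] at hσ
    obtain ⟨a, b, hab, h3⟩ := hσ
    -- WLOG P a and ¬ P b
    obtain ⟨a, b, ha, hb⟩ : ∃ a b : M, RelMap Psymb ![a] ∧ ¬ RelMap Psymb ![b] := by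
      by_cases h : RelMap Psymb ![a]
      · exact ⟨a, b, h, fun hb => hab ⟨fun _ => hb, fun _ => h⟩⟩
      · refine ⟨b, a, ?_, h⟩
        by_contra hb
        exact hab ⟨fun ha' => absurd ha' h, fun hb' => absurd hb' hb⟩
    have hne : a ≠ b := fun e => hb (e ▸ ha)
    have hcover : ∀ m : M, m = a ∨ m = b := by
      intro m
      rcases h3 m a b with h | h | h
      · exact Or.inl h
      · exact Or.inr h
      · exact absurd h hne
    have hP : ∀ m : M, RelMap Psymb ![m] ↔ m = a := by
      intro m
      rcases hcover m with rfl | rfl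
      · exact ⟨fun _ => rfl, fun _ => ha⟩
      · exact ⟨fun h => absurd h hb, fun h => absurd h (Ne.symm hne)⟩
    let g : M ≃[LP] Bool :=
      { toFun := fun m => if m = a then true else false
        invFun := fun c => if c then a else b
        left_inv := by
          intro m
          rcases hcover m with rfl | rfl
          · simp
          · simp [Ne.symm hne]
        right_inv := by
          intro c
          cases c <;> simp [hne, Ne.symm hne]
        map_fun' := fun {n} f _ => Empty.elim f
        map_rel' := by
          intro n r x
          cases r
          show ((if x 0 = a then true else false) = true) ↔ _
          have hx : x = ![x 0] := by
            funext i
            fin_cases i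
            rfl
          rw [hx]
          by_cases h : x 0 = a <;> simp [h, hP] }
    exact (StrongHomClass.realize_sentence g Φ).mp hΦ
end

section
/- Let F, G, H be simple graphs on finite vertex types. Then the following are equivalent. (a) F arrows (G, H): for every 2-coloring c of the edge set of F into red and blue, either there is an injective graph homomorphism g from G to F such that every edge in the image of an edge of G under g is colored red, or there is an injective graph homomorphism h from H to F such that every edge in the image of an edge of H under h is colored blue. (b) For every type X and every pair of symmetric relations E and C on X: if there is an isomorphic embedding of F into (X, E) — an injective map φ from the vertices of F to X such that for all vertices u ≠ v of F, E (φ u) (φ v) holds iff u and v are adjacent in F — then there is such an embedding φ together with either an injective map g from the vertices of G to the vertices of F such that for every edge (u,v) of G both F.Adj (g u) (g v) and C (φ (g u)) (φ (g v)) hold, or an injective map h from the vertices of H to the vertices of F such that for every edge (u,v) of H both F.Adj (h u) (h v) and ¬ C (φ (h u)) (φ (h v)) hold. (This is the graph-theoretic correctness of the reduction from the arrowing problem used in the paper's Theorem 4: F arrows (G,H) iff the two constructed FODDs B₁ and B₂ are equivalent on all interpretations (X, E_F, E_C).) -/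
/-- **Graph-theoretic correctness of the arrowing reduction (Theorem 4).**
`F` arrows `(G, H)` (every red/blue coloring of the edges of `F` contains a red embedded
copy of `G` or a blue embedded copy of `H`) iff for every "interpretation" `(X, E, C)` with
`E`, `C` symmetric relations: whenever `F` isomorphically embeds into `(X, E)`, there is such
an embedding together with either a red copy of `G` or a blue copy of `H` (colors read off
from `C`). -/
theorem arrowing_iff_fodd_equivalence (VF VG VH : Type)
    [Fintype VF] [Fintype VG] [Fintype VH]
    (F : SimpleGraph VF) (G : SimpleGraph VG) (H : SimpleGraph VH) :
    (∀ c : F.edgeSet → Bool,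
        (∃ g : G →g F, Function.Injective g ∧
          ∀ (u v : VG) (h : G.Adj u v),
            c ⟨s(g u, g v), F.mem_edgeSet.mpr (g.map_adj h)⟩ = true) ∨
        (∃ h : H →g F, Function.Injective h ∧
          ∀ (u v : VH) (e : H.Adj u v),
            c ⟨s(h u, h v), F.mem_edgeSet.mpr (h.map_adj e)⟩ = false)) ↔
      (∀ (X : Type) (E C : X → X → Prop),
        (∀ x y, E x y ↔ E y x) → (∀ x y, C x y ↔ C y x) →
        (∃ φ : VF → X, Function.Injective φ ∧
          ∀ u v : VF, u ≠ v → (E (φ u) (φ v) ↔ F.Adj u v)) →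
        ∃ φ : VF → X, Function.Injective φ ∧
          (∀ u v : VF, u ≠ v → (E (φ u) (φ v) ↔ F.Adj u v)) ∧
          ((∃ g : VG → VF, Function.Injective g ∧
              ∀ u v : VG, G.Adj u v → F.Adj (g u) (g v) ∧ C (φ (g u)) (φ (g v))) ∨
            (∃ h : VH → VF, Function.Injective h ∧
              ∀ u v : VH, H.Adj u v → F.Adj (h u) (h v) ∧ ¬ C (φ (h u)) (φ (h v))))) := by
  classical
  constructor
  · intro harrow X E C _hE hC ⟨φ, hφinj, hφ⟩
    refine ⟨φ, hφinj, hφ, ?_⟩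
    set c : F.edgeSet → Bool := fun e =>
      Sym2.lift ⟨fun x y => decide (C (φ x) (φ y)), fun x y => by
        simp [decide_eq_decide, hC (φ x) (φ y)]⟩ e.val with hc
    rcases harrow c with ⟨g, hginj, hg⟩ | ⟨h, hhinj, hh⟩
    · refine Or.inl ⟨g, hginj, fun u v huv => ⟨g.map_adj huv, ?_⟩⟩
      have := hg u v huv
      simp only [hc, Sym2.lift_mk] at this
      exact of_decide_eq_true this
    · refine Or.inr ⟨h, hhinj, fun u v huv => ⟨h.map_adj huv, ?_⟩⟩
      have := hh u v huv
      simp only [hc, Sym2.lift_mk] at this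
      exact of_decide_eq_false this
  · intro hfodd c
    set C : VF → VF → Prop := fun x y => ∃ h : F.Adj x y, c ⟨s(x, y), h⟩ = true with hCdef
    have hCsymm : ∀ x y, C x y ↔ C y x := by
      intro x y
      constructor <;> rintro ⟨h, hcv⟩
      · exact ⟨h.symm, by rwa [show (⟨s(y, x), h.symm⟩ : F.edgeSet) = ⟨s(x, y), h⟩ from
          Subtype.ext (Sym2.eq_swap)]⟩
      · exact ⟨h.symm, by rwa [show (⟨s(x, y), h.symm⟩ : F.edgeSet) = ⟨s(y, x), h⟩ from
          Subtype.ext (Sym2.eq_swap)]⟩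
    obtain ⟨φ, hφinj, hφ, hcase⟩ := hfodd VF F.Adj C
      (fun x y => ⟨SimpleGraph.Adj.symm, SimpleGraph.Adj.symm⟩) hCsymm
      ⟨id, Function.injective_id, fun u v _ => Iff.rfl⟩
    rcases hcase with ⟨g, hginj, hg⟩ | ⟨h, hhinj, hh⟩
    · left
      refine ⟨⟨fun u => φ (g u), fun {u v} huv => ?_⟩, hφinj.comp hginj, fun u v huv => ?_⟩
      · exact (hφ (g u) (g v) (hginj.ne huv.ne)).mpr ((hg u v huv).1)
      · have h2 := (hg u v huv).2
        obtain ⟨_, hcv⟩ := h2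
        exact hcv
    · right
      refine ⟨⟨fun u => φ (h u), fun {u v} huv => ?_⟩, hφinj.comp hhinj, fun u v huv => ?_⟩
      · exact (hφ (h u) (h v) (hhinj.ne huv.ne)).mpr ((hh u v huv).1)
      · have hnC := (hh u v huv).2
        by_contra hct
        rw [Bool.not_eq_false] at hct
        exact hnC ⟨_, hct⟩
end
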